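/- For all n ≥ 2, the polynomials AExc_n^+(s,t) = ∑_{π even in S_n} t^{exc(π)} s^{nexc(π)-1} and AExc_n^-(s,t) = ∑_{π odd in S_n} t^{exc(π)} s^{nexc(π)-1} satisfy AExc_n^+(s,t) = s·AExc_{n-1}^+(s,t) + t·AExc_{n-1}^-(s,t) + (1/2)·st·D A_{n-1}(s,t), where A_{n-1}(s,t) = ∑_{π ∈ S_{n-1}} t^{exc(π)} s^{nexc(π)-1} and D = ∂/∂s + ∂/∂t. -/

import Mathlib

open Finset MvPolynomial

/-- Number of excedances of a permutation of `{0,…,n-1}`. -/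
def excA {n : ℕ} (π : Equiv.Perm (Fin n)) : ℕ :=
  (Finset.univ.filter (fun i => i < π i)).card

/-- Number of non-excedances. -/
def nexcA {n : ℕ} (π : Equiv.Perm (Fin n)) : ℕ := n - excA π

/-- Number of inversions. -/
def invA {n : ℕ} (π : Equiv.Perm (Fin n)) : ℕ :=
  (Finset.univ.filter (fun p : Fin n × Fin n => p.1 < p.2 ∧ π p.2 < π p.1)).card

/-- The bivariate excedance polynomial `A_n(s,t)` (with `s = X 0`, `t = X 1`). -/
noncomputable def Aexc (n : ℕ) : MvPolynomial (Fin 2) ℚ :=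
  ∑ π : Equiv.Perm (Fin n), X 1 ^ excA π * X 0 ^ (nexcA π - 1)

/-- The bivariate excedance polynomial over even permutations. -/
noncomputable def AexcP (n : ℕ) : MvPolynomial (Fin 2) ℚ :=
  ∑ π ∈ Finset.univ.filter (fun π : Equiv.Perm (Fin n) => Even (invA π)),
    X 1 ^ excA π * X 0 ^ (nexcA π - 1)

/-- The bivariate excedance polynomial over odd permutations. -/
noncomputable def AexcM (n : ℕ) : MvPolynomial (Fin 2) ℚ :=
  ∑ π ∈ Finset.univ.filter (fun π : Equiv.Perm (Fin n) => ¬ Even (invA π)),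
    X 1 ^ excA π * X 0 ^ (nexcA π - 1)

/-- The operator `D = d/ds + d/dt`. -/
noncomputable def Dop (f : MvPolynomial (Fin 2) ℚ) : MvPolynomial (Fin 2) ℚ :=
  pderiv 0 f + pderiv 1 f

/-!
Decompose `π ∈ S_{n+1}` by `π 0` (`Equiv.Perm.decomposeFin`). Fixing `0` multiplies the monomial
of `σ ∈ S_n` by `s`; sending `0` elsewhere flips the sign, and summing over the `n` choices
produces `s t D + t` applied to the monomial of `σ`. This gives
`A⁺_{n+1} = s A⁺_n + (s t D + t) A⁻_n`. Moreover `A⁺_n - A⁻_n = (s - t)^(n-1)`, which `D`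
kills, so `D A⁻_n = ½ D A_n`.
-/

open Equiv Equiv.Perm

theorem signAux_eq_sign {n : ℕ} (π : Perm (Fin n)) : signAux π = sign π := by
  induction π using swap_induction_on with
  | one => simp
  | swap_mul g x y hxy ih =>
    rw [signAux_mul, Perm.sign_mul, signAux_swap hxy, sign_swap hxy, ih]

theorem sign_eq_neg_one_pow_invA {n : ℕ} (π : Perm (Fin n)) :
    sign π = (-1 : ℤˣ) ^ invA π := by
  rw [← signAux_eq_sign, signAux, prod_ite, prod_const, prod_const, one_pow, mul_one, invA]
  congr 1
  refine card_bij (fun x _ => (x.2, x.1)) ?_ ?_ ?_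
  · rintro ⟨a, b⟩ hx
    simp only [mem_filter, mem_finPairsLT] at hx ⊢
    exact ⟨mem_univ _, hx.1, hx.2.lt_of_ne fun h => hx.1.ne' (π.injective h)⟩
  · rintro ⟨a, b⟩ _ ⟨c, d⟩ _ h
    simp_all
  · rintro ⟨a, b⟩ hp
    simp only [mem_filter, mem_univ, true_and] at hp
    exact ⟨⟨b, a⟩, by simp [mem_filter, mem_finPairsLT, hp.1, hp.2.le], rfl⟩

theorem even_invA_iff_sign_eq_one {n : ℕ} (π : Perm (Fin n)) :
    Even (invA π) ↔ sign π = 1 := by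
  rw [sign_eq_neg_one_pow_invA, neg_one_pow_eq_one_iff_even (by decide)]

theorem excA_le {n : ℕ} (π : Perm (Fin (n + 1))) : excA π ≤ n := by
  have hlast : Fin.last n ∉ univ.filter (fun i => i < π i) := by
    simpa using Fin.le_last (π (Fin.last n))
  simpa [excA] using card_lt_univ_of_notMem hlast

theorem excA_eq_sum {n : ℕ} (π : Perm (Fin n)) :
    excA π = ∑ i, if i < π i then 1 else 0 :=
  card_filter _ _

theorem excA_decomposeFin_symm_zero {n : ℕ} (σ : Perm (Fin n)) :
    excA (decomposeFin.symm (0, σ)) = excA σ := by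
  rw [excA_eq_sum, excA_eq_sum, Fin.sum_univ_succ]
  simp [Fin.succ_lt_succ_iff]

theorem excA_decomposeFin_symm_succ {n : ℕ} (σ : Perm (Fin n)) (i : Fin n) :
    excA (decomposeFin.symm ((σ i).succ, σ)) = excA σ + if i < σ i then 0 else 1 := by
  have hterm : ∀ j : Fin n,
      (if j.succ < decomposeFin.symm ((σ i).succ, σ) j.succ then 1 else 0)
        = if j = i then 0 else if j < σ j then 1 else 0 := by
    intro j
    rw [decomposeFin_symm_apply_succ]
    by_cases h : j = i
    · simp [h, (Fin.zero_le _).not_gt]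
    · rw [if_neg h, swap_apply_of_ne_of_ne (Fin.succ_ne_zero _)
        fun h' => h (σ.injective (Fin.succ_injective _ h'))]
      simp [Fin.succ_lt_succ_iff]
  rw [excA_eq_sum, Fin.sum_univ_succ, decomposeFin_symm_apply_zero, if_pos (Fin.succ_pos _),
    sum_congr rfl fun j _ => hterm j, excA_eq_sum, ← add_sum_erase _ _ (mem_univ i),
    ← add_sum_erase _ (fun j => if j < σ j then 1 else 0) (mem_univ i),
    sum_congr rfl fun j hj => if_neg (ne_of_mem_erase hj)]
  split_ifs <;> omega

noncomputable def excMonomial (m e : ℕ) : MvPolynomial (Fin 2) ℚ := X 1 ^ e * X 0 ^ (m - e)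

theorem excMonomial_succ_left {m e : ℕ} (h : e ≤ m) :
    excMonomial (m + 1) e = X 0 * excMonomial m e := by
  rw [excMonomial, excMonomial, Nat.sub_add_comm h, pow_succ]
  ring

theorem excMonomial_succ_succ (m e : ℕ) :
    excMonomial (m + 1) (e + 1) = X 1 * excMonomial m e := by
  rw [excMonomial, excMonomial, Nat.add_sub_add_right, pow_succ]
  ring

noncomputable def Dop.derivation :
    Derivation ℚ (MvPolynomial (Fin 2) ℚ) (MvPolynomial (Fin 2) ℚ) :=
  pderiv 0 + pderiv 1

theorem Dop_eq_derivation (f : MvPolynomial (Fin 2) ℚ) : Dop f = Dop.derivation f := rfl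

theorem Dop_add (f g : MvPolynomial (Fin 2) ℚ) : Dop (f + g) = Dop f + Dop g :=
  map_add Dop.derivation f g

theorem Dop_neg (f : MvPolynomial (Fin 2) ℚ) : Dop (-f) = -Dop f :=
  map_neg Dop.derivation f

theorem Dop.derivation_X (i : Fin 2) : Dop.derivation (X i) = 1 := by
  fin_cases i <;> simp [Dop.derivation, pderiv_X]

theorem X_mul_Dop_X_pow (i : Fin 2) (k : ℕ) : X i * Dop (X i ^ k) = k • X i ^ k := by
  rw [Dop_eq_derivation, Derivation.leibniz_pow, Dop.derivation_X, smul_eq_mul, mul_one,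
    mul_smul_comm]
  rcases k with _ | k
  · simp
  · rw [Nat.add_sub_cancel, pow_succ']

theorem X_mul_X_mul_Dop_excMonomial (m e : ℕ) :
    X 0 * X 1 * Dop (excMonomial m e)
      = e • (X 0 * excMonomial m e) + (m - e) • (X 1 * excMonomial m e) := by
  have h0 := X_mul_Dop_X_pow 0 (m - e)
  have h1 := X_mul_Dop_X_pow 1 e
  rw [Dop_eq_derivation] at h0 h1 ⊢
  rw [excMonomial, Derivation.leibniz, smul_eq_mul, smul_eq_mul]
  linear_combination X 1 ^ (e + 1) * h0 + X 0 ^ (m - e + 1) * h1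

theorem Dop_X_sub_X_pow (k : ℕ) : Dop ((X 0 - X 1 : MvPolynomial (Fin 2) ℚ) ^ k) = 0 := by
  rw [Dop_eq_derivation, Derivation.leibniz_pow, map_sub, Dop.derivation_X, Dop.derivation_X,
    sub_self, smul_zero, smul_zero]

-- Indexed by the degree `n` of its monomials, so that it sums over `S_{n+1}`; this avoids the
-- truncated subtraction `nexcA π - 1` of `Aexc`.
noncomputable def signExcPoly (n : ℕ) (a b : ℚ) : MvPolynomial (Fin 2) ℚ :=
  ∑ π : Perm (Fin (n + 1)), (if sign π = 1 then a else b) • excMonomial n (excA π)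

theorem sum_excMonomial_decomposeFin_symm_succ {n : ℕ} (σ : Perm (Fin (n + 1))) :
    ∑ i, excMonomial (n + 1) (excA (decomposeFin.symm ((σ i).succ, σ)))
      = X 0 * X 1 * Dop (excMonomial n (excA σ)) + X 1 * excMonomial n (excA σ) := by
  have hle := excA_le σ
  have hterm : ∀ i, excMonomial (n + 1) (excA (decomposeFin.symm ((σ i).succ, σ)))
      = if i < σ i then X 0 * excMonomial n (excA σ) else X 1 * excMonomial n (excA σ) := by
    intro i
    rw [excA_decomposeFin_symm_succ]
    split_ifs
    · rw [add_zero, excMonomial_succ_left hle]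
    · rw [excMonomial_succ_succ]
  have hcard : #{i | ¬ i < σ i} = n - excA σ + 1 := by
    have := card_filter_add_card_filter_not (s := univ) (fun i : Fin (n + 1) => i < σ i)
    rw [card_univ, Fintype.card_fin] at this
    change excA σ + _ = _ at this
    omega
  rw [sum_congr rfl fun i _ => hterm i, sum_ite, sum_const, sum_const, hcard,
    X_mul_X_mul_Dop_excMonomial, succ_nsmul, add_assoc]
  rfl

-- With `π = decomposeFin.symm (p, σ)`: `p = 0` keeps the sign and the excedances of `σ`, while
-- `p = (σ i).succ` flips the sign and adds an excedance exactly when `i` is not one of `σ`.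
theorem signExcPoly_succ (n : ℕ) (a b : ℚ) :
    signExcPoly (n + 1) a b = X 0 * signExcPoly n a b
      + X 0 * X 1 * Dop (signExcPoly n b a) + X 1 * signExcPoly n b a := by
  have hweight (σ : Perm (Fin (n + 1))) (i : Fin (n + 1)) :
      (if sign (decomposeFin.symm ((σ i).succ, σ)) = 1 then a else b)
        = if sign σ = 1 then b else a := by
    rw [decomposeFin.symm_sign, if_neg (Fin.succ_ne_zero _)]
    rcases Int.units_eq_one_or (sign σ) with h | h <;> simp [h]
  rw [signExcPoly, ← decomposeFin.symm.sum_comp, Fintype.sum_prod_type, sum_comm]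
  simp only [signExcPoly, Dop_eq_derivation, map_sum, mul_sum, ← sum_add_distrib]
  refine sum_congr rfl fun σ _ => ?_
  rw [Fin.sum_univ_succ, ← Equiv.sum_comp σ]
  simp only [hweight, ← smul_sum, sum_excMonomial_decomposeFin_symm_succ]
  simp only [decomposeFin.symm_sign, excA_decomposeFin_symm_zero,
    excMonomial_succ_left (excA_le σ)]
  rw [ite_true, one_mul, Derivation.map_smul, ← Dop_eq_derivation, smul_add, mul_smul_comm,
    mul_smul_comm, mul_smul_comm, add_assoc]

theorem signExcPoly_eq_smul_add_smul (n : ℕ) (a b : ℚ) :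
    signExcPoly n a b = a • signExcPoly n 1 0 + b • signExcPoly n 0 1 := by
  simp only [signExcPoly, smul_sum, ← sum_add_distrib]
  refine sum_congr rfl fun π _ => ?_
  split_ifs <;> simp

theorem signExcPoly_one_neg_one (n : ℕ) :
    signExcPoly n 1 (-1) = (X 0 - X 1 : MvPolynomial (Fin 2) ℚ) ^ n := by
  induction n with
  | zero =>
    rw [signExcPoly, show (univ : Finset (Perm (Fin 1))) = {1} from univ_unique, sum_singleton]
    simp [excMonomial, excA]
  | succ n ih =>
    have hswap : signExcPoly n (-1) 1 = -signExcPoly n 1 (-1) := by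
      rw [signExcPoly_eq_smul_add_smul n (-1) 1, signExcPoly_eq_smul_add_smul n 1 (-1)]
      module
    rw [signExcPoly_succ, hswap, ih, Dop_neg, Dop_X_sub_X_pow]
    ring

theorem Dop_signExcPoly_one_zero (n : ℕ) :
    Dop (signExcPoly n 1 0) = Dop (signExcPoly n 0 1) := by
  have hsplit : signExcPoly n 1 0 = signExcPoly n 1 (-1) + signExcPoly n 0 1 := by
    rw [signExcPoly_eq_smul_add_smul n 1 (-1)]
    module
  rw [hsplit, Dop_add, signExcPoly_one_neg_one, Dop_X_sub_X_pow, zero_add]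

theorem X_pow_excA_mul_X_pow_nexcA_sub_one {n : ℕ} (π : Perm (Fin (n + 1))) :
    X 1 ^ excA π * X 0 ^ (nexcA π - 1) = excMonomial n (excA π) := by
  rw [excMonomial, nexcA, Nat.sub_right_comm, Nat.add_sub_cancel]

theorem AexcP_succ_eq_signExcPoly (n : ℕ) : AexcP (n + 1) = signExcPoly n 1 0 := by
  simp only [AexcP, signExcPoly, sum_filter, even_invA_iff_sign_eq_one,
    X_pow_excA_mul_X_pow_nexcA_sub_one]
  refine sum_congr rfl fun π _ => ?_
  split_ifs <;> simp

theorem AexcM_succ_eq_signExcPoly (n : ℕ) : AexcM (n + 1) = signExcPoly n 0 1 := by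
  simp only [AexcM, signExcPoly, sum_filter, even_invA_iff_sign_eq_one,
    X_pow_excA_mul_X_pow_nexcA_sub_one]
  refine sum_congr rfl fun π _ => ?_
  split_ifs <;> simp

theorem Aexc_eq_AexcP_add_AexcM (n : ℕ) : Aexc n = AexcP n + AexcM n :=
  (sum_filter_add_sum_filter_not _ _ _).symm

theorem AexcP_succ_succ (n : ℕ) :
    AexcP (n + 2)
      = X 0 * AexcP (n + 1) + X 0 * X 1 * Dop (AexcM (n + 1)) + X 1 * AexcM (n + 1) := by
  rw [AexcP_succ_eq_signExcPoly, AexcP_succ_eq_signExcPoly, AexcM_succ_eq_signExcPoly,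
    signExcPoly_succ]

theorem Dop_AexcP_succ_eq_Dop_AexcM_succ (n : ℕ) : Dop (AexcP (n + 1)) = Dop (AexcM (n + 1)) := by
  rw [AexcP_succ_eq_signExcPoly, AexcM_succ_eq_signExcPoly, Dop_signExcPoly_one_zero]

theorem stmt4 (n : ℕ) (hn : 2 ≤ n) :
    AexcP n = X 0 * AexcP (n - 1) + X 1 * AexcM (n - 1) +
      (1 / 2 : ℚ) • (X 0 * X 1 * Dop (Aexc (n - 1))) := by
  obtain ⟨m, rfl⟩ : ∃ m, n = m + 2 := ⟨n - 2, by omega⟩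
  rw [show m + 2 - 1 = m + 1 from rfl, AexcP_succ_succ, Aexc_eq_AexcP_add_AexcM, Dop_add,
    Dop_AexcP_succ_eq_Dop_AexcM_succ, ← two_smul ℚ (Dop _), mul_smul_comm, smul_smul]
  norm_num
  ring
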